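/- arXiv:1306.6057 — 2 statements merged into one kernel-verified Lean document; each statement's English description precedes it below -/
import Mathlib

section
/- Let q ≡ 0 (mod 4), m, n ∈ ℤ with (m,n) ≠ (0,0), and σ ∈ {±1, ±i}. Then the sum over p in (ℤ/qℤ)^× with ε_p·(q/p) = σ of e^{2πi(mp + n·p̄)/q} (where p̄ denotes the multiplicative inverse of p mod q) is bounded in absolute value by 7·gcd(m,n,q)^{1/2}·q^{1/2}·τ(q), where τ(q) is the number of positive divisors of q. -/
/-!
Write `t_p = ε_p (q/p)`. Since `t_p ^ 4 = 1`, the indicator of `t_p = σ` is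
`(1/4) ∑_{k<4} (t_p σ⁻¹)^k`, so the level-set sum is an average of the four sums
`∑ t_p ^ k e((mp + np̄)/q)`. For `k = 0, 1` these are the classical and the twisted Kloosterman
sums. For `k = 2, 3` one uses `t_p ^ 2 = χ₋₄(p) = -i · i ^ p` and `i ^ p = e((q/4) p / q)`:
they are `-i` times the same two sums at the frequency `m + q/4`, whose gcd with `gcd(n, q)` is
at most four times `gcd(m, n, q)`. This gives the bound with the constant `3/2 ≤ 7`.
-/

open Complex Real

section RootsOfUnityFilter

open Finset

variable {ι : Type*} (A : Finset ι) (t F : ι → ℂ) {n : ℕ} {σ : ℂ}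

theorem sum_pow_mul_inv_eq_ite {x : ℂ} (hn : 0 < n) (hx : x ^ n = 1)
    (hσ : σ ^ n = 1) :
    ∑ k ∈ range n, (x * σ⁻¹) ^ k = if x = σ then (n : ℂ) else 0 := by
  have hσ0 : σ ≠ 0 := by rintro rfl; simp [zero_pow hn.ne'] at hσ
  split_ifs with h
  · simp [h, hσ0]
  · have hne : x * σ⁻¹ ≠ 1 := fun h' => h ((mul_inv_eq_one₀ hσ0).mp h')
    rw [geom_sum_eq hne, mul_pow, inv_pow, hx, hσ, inv_one, mul_one, sub_self, zero_div]

theorem sum_filter_eq_of_pow_eq_one (hn : 0 < n) (ht : ∀ i ∈ A, t i ^ n = 1)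
    (hσ : σ ^ n = 1) :
    ∑ i ∈ A with t i = σ, F i
      = (n : ℂ)⁻¹ * ∑ k ∈ range n, σ⁻¹ ^ k * ∑ i ∈ A, t i ^ k * F i := by
  have hn' : (n : ℂ) ≠ 0 := by exact_mod_cast hn.ne'
  calc ∑ i ∈ A with t i = σ, F i
      = (n : ℂ)⁻¹ * ∑ i ∈ A, (∑ k ∈ range n, (t i * σ⁻¹) ^ k) * F i := by
        simp_rw [sum_filter, mul_sum]
        refine sum_congr rfl fun i hi => ?_
        rw [sum_pow_mul_inv_eq_ite hn (ht i hi) hσ]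
        split_ifs <;> simp [hn']
    _ = (n : ℂ)⁻¹ * ∑ k ∈ range n, σ⁻¹ ^ k * ∑ i ∈ A, t i ^ k * F i := by
        congr 1
        simp_rw [sum_mul, mul_sum]
        rw [sum_comm]
        exact sum_congr rfl fun k _ => sum_congr rfl fun i _ => by ring

theorem norm_sum_filter_le_of_pow_eq_one (hn : 0 < n) (ht : ∀ i ∈ A, t i ^ n = 1)
    (hσ : σ ^ n = 1) :
    ‖∑ i ∈ A with t i = σ, F i‖
      ≤ (n : ℝ)⁻¹ * ∑ k ∈ range n, ‖∑ i ∈ A, t i ^ k * F i‖ := by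
  have hσ1 : ‖σ‖ = 1 := by
    refine (pow_eq_one_iff_of_nonneg (norm_nonneg σ) hn.ne').mp ?_
    rw [← norm_pow, hσ, norm_one]
  rw [sum_filter_eq_of_pow_eq_one A t F hn ht hσ, norm_mul, norm_inv, Complex.norm_natCast]
  gcongr
  refine (norm_sum_le _ _).trans (le_of_eq (sum_congr rfl fun k _ => ?_))
  rw [norm_mul, norm_pow, norm_inv, hσ1]
  simp

theorem norm_sum_filter_le_of_sq_mul_eq (G : ι → ℂ) {c : ℂ} (hc : ‖c‖ = 1)
    (ht : ∀ i ∈ A, t i ^ 4 = 1) (hσ : σ ^ 4 = 1)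
    (htF : ∀ i ∈ A, t i ^ 2 * F i = c * G i) :
    ‖∑ i ∈ A with t i = σ, F i‖
      ≤ (‖∑ i ∈ A, F i‖ + ‖∑ i ∈ A, t i * F i‖
          + ‖∑ i ∈ A, G i‖ + ‖∑ i ∈ A, t i * G i‖) / 4 := by
  have h2 : ∑ i ∈ A, t i ^ 2 * F i = c * ∑ i ∈ A, G i := by
    rw [mul_sum]; exact sum_congr rfl htF
  have h3 : ∑ i ∈ A, t i ^ 3 * F i = c * ∑ i ∈ A, t i * G i := by
    rw [mul_sum]
    refine sum_congr rfl fun i hi => ?_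
    rw [pow_succ', mul_assoc, htF i hi]; ring
  refine (norm_sum_filter_le_of_pow_eq_one A t F (by norm_num) ht hσ).trans (le_of_eq ?_)
  simp only [Nat.cast_ofNat, sum_range_succ, range_one, sum_singleton, pow_zero, one_mul,
    pow_one, h2, h3, Complex.norm_mul, hc]
  ring

end RootsOfUnityFilter

theorem Int.gcd_add_le_mul_gcd {k : ℕ} (hk : k ≠ 0) {m c N : ℤ} (h : N ∣ k * c) :
    Int.gcd (m + c) N ≤ k * Int.gcd m N := by
  rcases Nat.eq_zero_or_pos (Int.gcd m N) with h0 | hpos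
  · obtain ⟨rfl, rfl⟩ := Int.gcd_eq_zero_iff.mp h0
    obtain rfl : c = 0 := by simpa [hk] using h
    simp
  have hdvd : (Int.gcd (m + c) N : ℤ) ∣ k * Int.gcd m N := by
    have hN : (Int.gcd (m + c) N : ℤ) ∣ N := Int.gcd_dvd_right _ _
    have hm : (Int.gcd (m + c) N : ℤ) ∣ k * m := by
      have := (Dvd.dvd.mul_left (Int.gcd_dvd_left (m + c) N) k).sub (hN.trans h)
      rwa [mul_add, add_sub_cancel_right] at this
    have := Int.dvd_coe_gcd hm (hN.mul_left k)
    rwa [Int.gcd_mul_left, Int.natAbs_natCast] at this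
  exact Nat.le_of_dvd (by positivity) (by exact_mod_cast hdvd)

theorem sqrt_gcd_add_quarter_le (q : ℕ) (h4 : 4 ∣ q) (m n : ℤ) :
    √(Int.gcd (m + (q / 4 : ℕ)) (Int.gcd n q)) ≤ 2 * √(Int.gcd m (Int.gcd n q)) := by
  have hN : ((Int.gcd n q : ℕ) : ℤ) ∣ 4 * (q / 4 : ℕ) := by
    rw [← Nat.cast_ofNat, ← Nat.cast_mul, Nat.mul_div_cancel' h4]
    exact Int.gcd_dvd_right _ _
  have hle : (Int.gcd (m + (q / 4 : ℕ)) (Int.gcd n q) : ℝ) ≤ 4 * Int.gcd m (Int.gcd n q) := by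
    exact_mod_cast Int.gcd_add_le_mul_gcd four_ne_zero hN
  calc √(Int.gcd (m + (q / 4 : ℕ)) (Int.gcd n q))
      ≤ √(4 * Int.gcd m (Int.gcd n q)) := Real.sqrt_le_sqrt hle
    _ = 2 * √(Int.gcd m (Int.gcd n q)) := by
        rw [Real.sqrt_mul (by norm_num), show (4 : ℝ) = 2 ^ 2 by norm_num,
          Real.sqrt_sq (by norm_num)]

theorem exp_two_pi_I_shift_div_four {q : ℕ} (hq : q ≠ 0) (h4 : 4 ∣ q) (m : ℤ) (p : ℕ)
    (z : ℂ) :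
    exp (2 * π * I * (((m + (q / 4 : ℕ) : ℤ) : ℂ) * p + z) / q)
      = I ^ p * exp (2 * π * I * (m * p + z) / q) := by
  obtain ⟨k, rfl⟩ := h4
  have hk : (k : ℂ) ≠ 0 := by exact_mod_cast right_ne_zero_of_mul hq
  have hsplit : 2 * π * I * (((m + (4 * k / 4 : ℕ) : ℤ) : ℂ) * p + z) / (4 * k : ℕ)
      = p * (π / 2 * I) + 2 * π * I * (m * p + z) / (4 * k : ℕ) := by
    rw [Nat.mul_div_cancel_left k four_pos]
    push_cast
    field_simp
    ring
  rw [hsplit, Complex.exp_add, Complex.exp_nat_mul, exp_pi_div_two_mul_I]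

theorem epsilon_mul_jacobiSym_sq {q p : ℕ} (h2 : 2 ∣ q) (hp : p.Coprime q) :
    ((if p % 4 = 1 then (1 : ℂ) else I) * (jacobiSym q p : ℂ)) ^ 2 = -I * I ^ p := by
  have hJ : (jacobiSym q p : ℂ) ^ 2 = 1 := by
    exact_mod_cast jacobiSym.sq_one (by rw [Int.gcd_natCast_natCast]; exact hp.symm)
  have hodd : p % 4 = 1 ∨ p % 4 = 3 := by
    have := Nat.odd_iff.mp (hp.coprime_dvd_right h2).odd_of_right
    omega
  rw [mul_pow, hJ, mul_one, ← Nat.div_add_mod p 4, pow_add, pow_mul, I_pow_four, one_pow, one_mul]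
  rcases hodd with h | h <;> simp [h, pow_succ]

theorem epsilon_mul_jacobiSym_pow_four {q p : ℕ} (h2 : 2 ∣ q) (hp : p.Coprime q) :
    ((if p % 4 = 1 then (1 : ℂ) else I) * (jacobiSym q p : ℂ)) ^ 4 = 1 := by
  have hodd := (hp.coprime_dvd_right h2).odd_of_right
  rw [show 4 = 2 * 2 from rfl, pow_mul, epsilon_mul_jacobiSym_sq h2 hp, mul_pow, ← pow_mul,
    pow_mul', I_sq, hodd.neg_one_pow]
  simp

theorem kloosterman_level_set_bound_q_cong_zero_mod_four_general (q : ℕ)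
    (h4 : q % 4 = 0) (m n : ℤ) (σ : ℂ)
    (hσ : σ = 1 ∨ σ = -1 ∨ σ = I ∨ σ = -I)
    (hWeil : ∀ m' n' : ℤ,
      ‖∑ p ∈ Finset.filter (fun p => Nat.Coprime p q) (Finset.range q),
          Complex.exp (2 * π * I * (m' * p + n' * (((p : ZMod q)⁻¹).val : ℕ)) / q)‖
        ≤ Real.sqrt (Int.gcd m' (Int.gcd n' q)) * Real.sqrt q * q.divisors.card)
    (hWeilTwisted : ∀ m' n' : ℤ,
      ‖∑ p ∈ Finset.filter (fun p => Nat.Coprime p q) (Finset.range q),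
          (if p % 4 = 1 then (1 : ℂ) else I) * (jacobiSym q p : ℂ) *
            Complex.exp (2 * π * I * (m' * p + n' * (((p : ZMod q)⁻¹).val : ℕ)) / q)‖
        ≤ Real.sqrt (Int.gcd m' (Int.gcd n' q)) * Real.sqrt q * q.divisors.card) :
    ‖∑ p ∈ Finset.filter (fun p => Nat.Coprime p q ∧
          (if p % 4 = 1 then (1 : ℂ) else I) * (jacobiSym q p : ℂ) = σ) (Finset.range q),
        Complex.exp (2 * π * I * (m * p + n * (((p : ZMod q)⁻¹).val : ℕ)) / q)‖
      ≤ 7 * Real.sqrt (Int.gcd m (Int.gcd n q)) * Real.sqrt q * q.divisors.card := by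
  have h4q : 4 ∣ q := Nat.dvd_of_mod_eq_zero h4
  have h2q : 2 ∣ q := (by norm_num : 2 ∣ 4).trans h4q
  have hσ4 : σ ^ 4 = 1 := by rcases hσ with rfl | rfl | rfl | rfl <;> norm_num
  -- Twisting by `t_p ^ 2 = -i · i ^ p` is a shift of the frequency `m` by `q / 4`.
  have hshift : ∀ p ∈ (Finset.range q).filter (Nat.Coprime · q),
      ((if p % 4 = 1 then (1 : ℂ) else I) * (jacobiSym q p : ℂ)) ^ 2 *
          exp (2 * π * I * (m * p + n * (((p : ZMod q)⁻¹).val : ℕ)) / q)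
        = -I * exp (2 * π * I * (((m + (q / 4 : ℕ) : ℤ) : ℂ) * p
            + n * (((p : ZMod q)⁻¹).val : ℕ)) / q) := by
    intro p hp
    obtain ⟨hpq, hcop⟩ := Finset.mem_filter.mp hp
    have hq : q ≠ 0 := Nat.ne_zero_of_lt (Finset.mem_range.mp hpq)
    rw [epsilon_mul_jacobiSym_sq h2q hcop, exp_two_pi_I_shift_div_four hq h4q, mul_assoc]
  have ht4 : ∀ p ∈ (Finset.range q).filter (Nat.Coprime · q),
      ((if p % 4 = 1 then (1 : ℂ) else I) * (jacobiSym q p : ℂ)) ^ 4 = 1 :=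
    fun p hp => epsilon_mul_jacobiSym_pow_four h2q (Finset.mem_filter.mp hp).2
  rw [← Finset.filter_filter]
  refine (norm_sum_filter_le_of_sq_mul_eq _ _ _ _ (by simp) ht4 hσ4 hshift).trans ?_
  have hW : 0 ≤ √(Int.gcd m (Int.gcd n q)) * √q * q.divisors.card := by positivity
  have hW' : √(Int.gcd (m + (q / 4 : ℕ)) (Int.gcd n q)) * √q * q.divisors.card
      ≤ 2 * √(Int.gcd m (Int.gcd n q)) * √q * q.divisors.card := by
    gcongr; exact sqrt_gcd_add_quarter_le q h4q m n
  linarith [hWeil m n, hWeilTwisted m n, hWeil (m + (q / 4 : ℕ)) n,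
    hWeilTwisted (m + (q / 4 : ℕ)) n]

/-- Weil-type bound for the Kloosterman sum restricted to the level set
`ε_p (q/p) = σ`, for `q ≡ 0 mod 4`, assuming the Weil bounds for the classical
and the twisted Kloosterman sums. -/
theorem kloosterman_level_set_bound_q_cong_zero_mod_four (q : ℕ) (hq : 0 < q)
    (h4 : q % 4 = 0) (m n : ℤ) (hmn : (m, n) ≠ (0, 0)) (σ : ℂ)
    (hσ : σ = 1 ∨ σ = -1 ∨ σ = I ∨ σ = -I)
    (hWeil : ∀ m' n' : ℤ,
      ‖∑ p ∈ Finset.filter (fun p => Nat.Coprime p q) (Finset.range q),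
          Complex.exp (2 * π * I * (m' * p + n' * (((p : ZMod q)⁻¹).val : ℕ)) / q)‖
        ≤ Real.sqrt (Int.gcd m' (Int.gcd n' q)) * Real.sqrt q * q.divisors.card)
    (hWeilTwisted : ∀ m' n' : ℤ,
      ‖∑ p ∈ Finset.filter (fun p => Nat.Coprime p q) (Finset.range q),
          (if p % 4 = 1 then (1 : ℂ) else I) * (jacobiSym q p : ℂ) *
            Complex.exp (2 * π * I * (m' * p + n' * (((p : ZMod q)⁻¹).val : ℕ)) / q)‖
        ≤ Real.sqrt (Int.gcd m' (Int.gcd n' q)) * Real.sqrt q * q.divisors.card) :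
    ‖∑ p ∈ Finset.filter (fun p => Nat.Coprime p q ∧
          (if p % 4 = 1 then (1 : ℂ) else I) * (jacobiSym q p : ℂ) = σ) (Finset.range q),
        Complex.exp (2 * π * I * (m * p + n * (((p : ZMod q)⁻¹).val : ℕ)) / q)‖
      ≤ 7 * Real.sqrt (Int.gcd m (Int.gcd n q)) * Real.sqrt q * q.divisors.card :=
  kloosterman_level_set_bound_q_cong_zero_mod_four_general q h4 m n σ hσ hWeil hWeilTwisted
end

section
/- Let f: ℝ → ℂ be Riemann integrable with compact support, X_q finite nonempty index sets, and g_q, g̃_q: X_q → ℂ functions with the following properties: (a) for every δ, ε > 0 there exist approximants g̃ with limsup_q (1/|X_q|)·|{x ∈ X_q : |g_q(x) - g̃_q(x)| > δ}| < ε; (b) for each approximant, the averages (1/|X_q|)·Σ_{x ∈ X_q} F(g̃_q(x)) converge as q → ∞ for every F ∈ C₀^∞(ℂ). Then for every Lipschitz bounded F: ℂ → ℝ, the sequence (1/|X_q|)·Σ_{x ∈ X_q} F(g_q(x)) is Cauchy and hence converges. -/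
open Filter

/-! A bounded Lipschitz `F` moves by at most `C δ` where `g` and `g̃` are `δ`-close and by at most
`2M` elsewhere, so the averages of `F ∘ g` and `F ∘ g̃` differ by at most `C δ + 2M ε` for large `q`.
Choosing `δ, ε` small, the averages of `F ∘ g` are uniformly close to a convergent, hence Cauchy,
sequence, and such sequences are themselves Cauchy. -/

theorem cauchySeq_of_forall_eventually_dist_le {α β : Type*} [PseudoMetricSpace α]
    [Nonempty β] [SemilatticeSup β] {a : β → α}
    (h : ∀ η > 0, ∃ b : β → α, CauchySeq b ∧ ∀ᶠ n in atTop, dist (a n) (b n) ≤ η) :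
    CauchySeq a := by
  refine Metric.cauchySeq_iff.2 fun ε hε => ?_
  obtain ⟨b, hb, hab⟩ := h (ε / 4) (by positivity)
  obtain ⟨N₁, hN₁⟩ := Metric.cauchySeq_iff.1 hb (ε / 4) (by positivity)
  obtain ⟨N₂, hN₂⟩ := eventually_atTop.1 hab
  refine ⟨N₁ ⊔ N₂, fun m hm n hn => ?_⟩
  have hbm := hN₂ m (sup_le_iff.1 hm).2
  have hbn := hN₂ n (sup_le_iff.1 hn).2
  have hbmn := hN₁ m (sup_le_iff.1 hm).1 n (sup_le_iff.1 hn).1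
  calc dist (a m) (a n) ≤ dist (a m) (b m) + dist (b m) (b n) + dist (b n) (a n) :=
        dist_triangle4 _ _ _ _
    _ < ε := by rw [dist_comm (b n)]; linarith

theorem isBoundedUnder_le_card_filter_div_card {α ι : Type*} (l : Filter ι) (s : ι → Finset α)
    (p : ι → α → Prop) [∀ i, DecidablePred (p i)] :
    IsBoundedUnder (· ≤ ·) l fun i => ((s i).filter (p i)).card / ((s i).card : ℝ) :=
  isBoundedUnder_of ⟨1, fun _ =>
    div_le_one_of_le₀ (mod_cast Finset.card_filter_le _ _) (Nat.cast_nonneg _)⟩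

namespace LipschitzWith

variable {α E : Type*} [SeminormedAddCommGroup E] {F : E → ℝ} {C : NNReal} {M δ : ℝ}

theorem abs_sub_le_mul_add_ite (hF : LipschitzWith C F) (hM : ∀ z, |F z| ≤ M) (hδ : 0 ≤ δ)
    (z w : E) : |F z - F w| ≤ C * δ + if δ < ‖z - w‖ then 2 * M else 0 := by
  split_ifs with hzw
  · have hCδ : 0 ≤ (C : ℝ) * δ := by positivity
    linarith [abs_sub (F z) (F w), hM z, hM w]
  · calc |F z - F w| ≤ C * ‖z - w‖ := by
          simpa only [dist_eq_norm, Real.norm_eq_abs] using hF.dist_le_mul z w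
      _ ≤ C * δ + 0 := by rw [add_zero]; gcongr; exact not_lt.1 hzw

theorem abs_sum_sub_sum_le (hF : LipschitzWith C F) (hM : ∀ z, |F z| ≤ M) (hδ : 0 ≤ δ)
    (s : Finset α) (g h : α → E) :
    |∑ x ∈ s, F (g x) - ∑ x ∈ s, F (h x)| ≤
      C * δ * s.card + 2 * M * (s.filter fun x => δ < ‖g x - h x‖).card := by
  rw [← Finset.sum_sub_distrib]
  calc |∑ x ∈ s, (F (g x) - F (h x))| ≤ ∑ x ∈ s, |F (g x) - F (h x)| :=
        Finset.abs_sum_le_sum_abs _ _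
    _ ≤ ∑ x ∈ s, (C * δ + if δ < ‖g x - h x‖ then 2 * M else 0) :=
        Finset.sum_le_sum fun x _ => hF.abs_sub_le_mul_add_ite hM hδ (g x) (h x)
    _ = C * δ * s.card + 2 * M * (s.filter fun x => δ < ‖g x - h x‖).card := by
        rw [Finset.sum_add_distrib, ← Finset.sum_filter]
        simp only [Finset.sum_const, nsmul_eq_mul]
        ring

theorem abs_sum_div_card_sub_le (hF : LipschitzWith C F) (hM : ∀ z, |F z| ≤ M) (hδ : 0 ≤ δ)
    (s : Finset α) (g h : α → E) :
    |(∑ x ∈ s, F (g x)) / s.card - (∑ x ∈ s, F (h x)) / s.card| ≤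
      C * δ + 2 * M * ((s.filter fun x => δ < ‖g x - h x‖).card / (s.card : ℝ)) := by
  rw [← sub_div, abs_div, Nat.abs_cast]
  calc |∑ x ∈ s, F (g x) - ∑ x ∈ s, F (h x)| / s.card
      ≤ (C * δ * s.card + 2 * M * (s.filter fun x => δ < ‖g x - h x‖).card) / s.card := by
        gcongr
        exact hF.abs_sum_sub_sum_le hM hδ s g h
    _ = C * δ * (s.card / s.card) +
          2 * M * ((s.filter fun x => δ < ‖g x - h x‖).card / (s.card : ℝ)) := by ring
    _ ≤ C * δ + 2 * M * ((s.filter fun x => δ < ‖g x - h x‖).card / (s.card : ℝ)) := by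
        gcongr ?_ + _
        exact mul_le_of_le_one_right (by positivity) (div_self_le_one _)

end LipschitzWith

theorem approximation_cauchy_general {α : Type*} (X : ℕ → Finset α)
    (g : ℕ → α → ℂ)
    (happrox : ∀ δ : ℝ, 0 < δ → ∀ ε : ℝ, 0 < ε → ∃ gt : ℕ → α → ℂ,
      limsup (fun q =>
          (((X q).filter (fun x => δ < ‖g q x - gt q x‖)).card : ℝ) / (X q).card) atTop < ε
      ∧ ∀ F : ℂ → ℝ, (∃ C : NNReal, LipschitzWith C F) → (∃ M : ℝ, ∀ z, |F z| ≤ M) →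
          ∃ l : ℝ, Tendsto (fun q => (∑ x ∈ X q, F (gt q x)) / (X q).card) atTop (nhds l)) :
    ∀ F : ℂ → ℝ, (∃ C : NNReal, LipschitzWith C F) → (∃ M : ℝ, ∀ z, |F z| ≤ M) →
      CauchySeq (fun q => (∑ x ∈ X q, F (g q x)) / (X q).card) ∧
      ∃ l : ℝ, Tendsto (fun q => (∑ x ∈ X q, F (g q x)) / (X q).card) atTop (nhds l) := by
  rintro F ⟨C, hC⟩ ⟨M, hM⟩
  have hM₀ : 0 ≤ M := (abs_nonneg _).trans (hM 0)
  have hcauchy : CauchySeq fun q => (∑ x ∈ X q, F (g q x)) / (X q).card := by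
    refine cauchySeq_of_forall_eventually_dist_le fun η hη => ?_
    obtain ⟨δ, hδ, hCδ⟩ := exists_pos_mul_lt (half_pos hη) C
    obtain ⟨ε, hε, hMε⟩ := exists_pos_mul_lt (half_pos hη) (2 * M)
    obtain ⟨gt, hlimsup, hconv⟩ := happrox δ hδ ε hε
    obtain ⟨l, hl⟩ := hconv F ⟨C, hC⟩ ⟨M, hM⟩
    refine ⟨_, hl.cauchySeq, ?_⟩
    filter_upwards [eventually_lt_of_limsup_lt hlimsup
      (isBoundedUnder_le_card_filter_div_card _ _ _)] with q hq
    calc dist _ _ ≤ C * δ + 2 * M * (((X q).filter fun x => δ < ‖g q x - gt q x‖).card /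
          ((X q).card : ℝ)) := hC.abs_sum_div_card_sub_le hM hδ.le (X q) (g q) (gt q)
      _ ≤ C * δ + 2 * M * ε := by gcongr
      _ ≤ η := by linarith
  exact ⟨hcauchy, cauchySeq_tendsto_of_complete hcauchy⟩

/-- Abstract approximation step: if `g` admits approximants `g̃` that agree with
`g` up to `δ` outside an exceptional set of asymptotic proportion `< ε`, and for
each approximant the averages of `F ∘ g̃` converge for every Lipschitz bounded
`F`, then for every Lipschitz bounded `F : ℂ → ℝ` the averages of `F ∘ g` form a
Cauchy sequence and hence converge. -/
theorem approximation_cauchy {α : Type*} (X : ℕ → Finset α) (hX : ∀ q, (X q).Nonempty)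
    (g : ℕ → α → ℂ)
    (happrox : ∀ δ : ℝ, 0 < δ → ∀ ε : ℝ, 0 < ε → ∃ gt : ℕ → α → ℂ,
      limsup (fun q =>
          (((X q).filter (fun x => δ < ‖g q x - gt q x‖)).card : ℝ) / (X q).card) atTop < ε
      ∧ ∀ F : ℂ → ℝ, (∃ C : NNReal, LipschitzWith C F) → (∃ M : ℝ, ∀ z, |F z| ≤ M) →
          ∃ l : ℝ, Tendsto (fun q => (∑ x ∈ X q, F (gt q x)) / (X q).card) atTop (nhds l)) :
    ∀ F : ℂ → ℝ, (∃ C : NNReal, LipschitzWith C F) → (∃ M : ℝ, ∀ z, |F z| ≤ M) →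
      CauchySeq (fun q => (∑ x ∈ X q, F (g q x)) / (X q).card) ∧
      ∃ l : ℝ, Tendsto (fun q => (∑ x ∈ X q, F (g q x)) / (X q).card) atTop (nhds l) :=
  approximation_cauchy_general X g happrox
end
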